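/- arXiv:1005.4390 — 3 statements merged into one kernel-verified Lean document; each statement's English description precedes it below -/
import Mathlib

section
/- Let Y = Σ_{α∈I} X_α be a finite sum of nontrivial exchangeable Bernoulli random variables, and for a fixed α let (X_β^α)_{β∈I} have the joint distribution of (X_β)_{β∈I} conditioned on X_α = 1. Then Y^α = Σ_{β∈I} X_β^α has the Y-size biased distribution, i.e., E[Y f(Y)] = E[Y] · E[f(Y^α)] for all bounded functions f. -/
open MeasureTheory ProbabilityTheory

/-! Write `Y = ∑ i, X i`. Transposing two indices fixes `Y`, so by exchangeability
`E[X i f(Y)]` does not depend on `i`, whence `E[Y f(Y)] = n E[X α f(Y)]` with `n = |I|`.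
As `X α` is the indicator of `{X α = 1}`, this is `n P(X α = 1) E[f(Y) | X α = 1]`, and
`f = 1` gives `E[Y] = n P(X α = 1)`. Finally `E[f(Y) | X α = 1] = E[f(Y^α)]` since `Y^α`
is the same function of a family with the conditional law. -/

section

variable {Ω : Type*} [MeasurableSpace Ω] {μ : Measure Ω}

lemma setIntegral_eq_measureReal_smul_integral_cond {E : Type*} [NormedAddCommGroup E]
    [NormedSpace ℝ E] [IsFiniteMeasure μ] {s : Set Ω} (h : Ω → E) :
    ∫ ω in s, h ω ∂μ = μ.real s • ∫ ω, h ω ∂μ[|s] := by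
  rw [ProbabilityTheory.cond, integral_smul_measure, ENNReal.toReal_inv, smul_smul]
  by_cases hs : μ s = 0
  · simp [Measure.restrict_eq_zero.mpr hs]
  · rw [measureReal_def,
      mul_inv_cancel₀ (ENNReal.toReal_ne_zero.mpr ⟨hs, measure_ne_top μ s⟩), one_smul]

lemma integral_mul_eq_setIntegral_of_zero_or_one {Y : Ω → ℝ} (hY : Measurable Y)
    (h01 : ∀ ω, Y ω = 0 ∨ Y ω = 1) (h : Ω → ℝ) :
    ∫ ω, Y ω * h ω ∂μ = ∫ ω in {ω | Y ω = 1}, h ω ∂μ := by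
  have hs : MeasurableSet {ω | Y ω = 1} := hY (measurableSet_singleton 1)
  rw [← integral_indicator hs]
  congr with ω
  rcases h01 ω with hω | hω <;> simp [Set.indicator, hω]

lemma integrable_mul_of_zero_or_one [IsFiniteMeasure μ] {Y h : Ω → ℝ} (hY : Measurable Y)
    (h01 : ∀ ω, Y ω = 0 ∨ Y ω = 1) (hh : AEStronglyMeasurable h μ) {C : ℝ}
    (hC : ∀ ω, |h ω| ≤ C) : Integrable (fun ω => Y ω * h ω) μ :=
  (Integrable.of_bound hh C (ae_of_all _ hC)).bdd_mul (c := 1) hY.aestronglyMeasurable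
    (ae_of_all _ fun ω => by rcases h01 ω with hω | hω <;> simp [hω])

variable {ι : Type*} [Fintype ι] {X : ι → Ω → ℝ} {g : ℝ → ℝ}

lemma integral_mul_comp_sum_eq_of_exchangeable (hX : ∀ i, Measurable (X i))
    (hexch : ∀ σ : Equiv.Perm ι,
      μ.map (fun ω i => X (σ i) ω) = μ.map (fun ω i => X i ω))
    (hg : Measurable g) (i j : ι) :
    ∫ ω, X i ω * g (∑ k, X k ω) ∂μ = ∫ ω, X j ω * g (∑ k, X k ω) ∂μ := by
  classical
  have hlaw : IdentDistrib (fun ω k => X (Equiv.swap i j k) ω) (fun ω k => X k ω) μ μ :=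
    ⟨by fun_prop, by fun_prop, hexch _⟩
  have hG : Measurable fun x : ι → ℝ => x j * g (∑ k, x k) := by fun_prop
  have hsum ω : ∑ k, X (Equiv.swap i j k) ω = ∑ k, X k ω := Equiv.sum_comp _ (X · ω)
  simpa [hsum] using (hlaw.comp hG).integral_eq

lemma integral_sum_mul_comp_sum_of_exchangeable [IsFiniteMeasure μ] (hX : ∀ i, Measurable (X i))
    (h01 : ∀ i ω, X i ω = 0 ∨ X i ω = 1)
    (hexch : ∀ σ : Equiv.Perm ι,
      μ.map (fun ω i => X (σ i) ω) = μ.map (fun ω i => X i ω))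
    (hg : Measurable g) {C : ℝ} (hC : ∀ x, |g x| ≤ C) (j : ι) :
    ∫ ω, (∑ i, X i ω) * g (∑ i, X i ω) ∂μ
      = Fintype.card ι * ∫ ω in {ω | X j ω = 1}, g (∑ i, X i ω) ∂μ := by
  have hint i : Integrable (fun ω => X i ω * g (∑ k, X k ω)) μ :=
    integrable_mul_of_zero_or_one (hX i) (h01 i) (hg.comp (by fun_prop)).aestronglyMeasurable
      fun ω => hC _
  simp_rw [Finset.sum_mul]
  rw [integral_finsetSum _ fun i _ => hint i,
    Finset.sum_congr rfl fun i _ => integral_mul_comp_sum_eq_of_exchangeable hX hexch hg i j,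
    Finset.sum_const, Finset.card_univ, nsmul_eq_mul,
    integral_mul_eq_setIntegral_of_zero_or_one (hX j) (h01 j)]

end

theorem sum_exchangeable_bernoulli_size_bias_general
    {Ω Ω' : Type*} [MeasureSpace Ω] [MeasureSpace Ω']
    [IsProbabilityMeasure (ℙ : Measure Ω)] [IsProbabilityMeasure (ℙ : Measure Ω')]
    {ι : Type*} [Fintype ι]
    (X : ι → Ω → ℝ) (hXmeas : ∀ i, Measurable (X i))
    (hBern : ∀ i ω, X i ω = 0 ∨ X i ω = 1)
    (hexch : ∀ σ : Equiv.Perm ι,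
      Measure.map (fun ω (i : ι) => X (σ i) ω) (ℙ : Measure Ω)
        = Measure.map (fun ω (i : ι) => X i ω) (ℙ : Measure Ω))
    (α : ι)
    (Xα : ι → Ω' → ℝ) (hXαmeas : ∀ i, Measurable (Xα i))
    (hcond : Measure.map (fun ω (i : ι) => Xα i ω) (ℙ : Measure Ω')
        = Measure.map (fun ω (i : ι) => X i ω)
            ((ℙ : Measure Ω)[|{ω | X α ω = 1}]))
    (f : ℝ → ℝ) (hf : Measurable f) (hfbdd : ∃ C, ∀ x, |f x| ≤ C) :
    ∫ ω, (∑ i, X i ω) * f (∑ i, X i ω) ∂(ℙ : Measure Ω)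
      = (∫ ω, (∑ i, X i ω) ∂(ℙ : Measure Ω))
          * ∫ ω, f (∑ i, Xα i ω) ∂(ℙ : Measure Ω') := by
  obtain ⟨C, hC⟩ := hfbdd
  have hmean :
      ∫ ω, ∑ i, X i ω ∂ℙ = Fintype.card ι * (ℙ : Measure Ω).real {ω | X α ω = 1} := by
    simpa using integral_sum_mul_comp_sum_of_exchangeable hXmeas hBern hexch
      measurable_const (C := 1) (fun _ => abs_one.le) α
  have hlaw :
      IdentDistrib (fun ω i => Xα i ω) (fun ω i => X i ω) ℙ ℙ[|{ω | X α ω = 1}] :=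
    ⟨by fun_prop, by fun_prop, hcond⟩
  have hsizebias :
      ∫ ω, f (∑ i, Xα i ω) ∂ℙ = ∫ ω, f (∑ i, X i ω) ∂ℙ[|{ω | X α ω = 1}] :=
    (hlaw.comp (hf.comp (by fun_prop : Measurable fun x : ι → ℝ => ∑ i, x i))).integral_eq
  rw [integral_sum_mul_comp_sum_of_exchangeable hXmeas hBern hexch hf hC α, hmean, hsizebias,
    setIntegral_eq_measureReal_smul_integral_cond, smul_eq_mul, mul_assoc]

/-- Lemma 1.1: size biasing a sum of exchangeable Bernoulli indicators by
conditioning on one of them being one. -/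
theorem sum_exchangeable_bernoulli_size_bias
    {Ω Ω' : Type*} [MeasureSpace Ω] [MeasureSpace Ω']
    [IsProbabilityMeasure (ℙ : Measure Ω)] [IsProbabilityMeasure (ℙ : Measure Ω')]
    {ι : Type*} [Fintype ι] [MeasurableSpace ι]
    (X : ι → Ω → ℝ) (hXmeas : ∀ i, Measurable (X i))
    (hBern : ∀ i ω, X i ω = 0 ∨ X i ω = 1)
    (hexch : ∀ σ : Equiv.Perm ι,
      Measure.map (fun ω (i : ι) => X (σ i) ω) (ℙ : Measure Ω)
        = Measure.map (fun ω (i : ι) => X i ω) (ℙ : Measure Ω))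
    (α : ι) (hnontriv : 0 < (ℙ : Measure Ω) {ω | X α ω = 1})
    (Xα : ι → Ω' → ℝ) (hXαmeas : ∀ i, Measurable (Xα i))
    (hcond : Measure.map (fun ω (i : ι) => Xα i ω) (ℙ : Measure Ω')
        = Measure.map (fun ω (i : ι) => X i ω)
            ((ℙ : Measure Ω)[|{ω | X α ω = 1}]))
    (f : ℝ → ℝ) (hf : Measurable f) (hfbdd : ∃ C, ∀ x, |f x| ≤ C) :
    ∫ ω, (∑ i, X i ω) * f (∑ i, X i ω) ∂(ℙ : Measure Ω)
      = (∫ ω, (∑ i, X i ω) ∂(ℙ : Measure Ω))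
          * ∫ ω, f (∑ i, Xα i ω) ∂(ℙ : Measure Ω') :=
  sum_exchangeable_bernoulli_size_bias_general X hXmeas hBern hexch α Xα hXαmeas hcond f hf hfbdd
end

section
/- Suppose for some n₁ ∈ ℕ the nonnegative reals f, {p_{n,l}}_{n ≥ n₁, 0 ≤ l ≤ n}, and {a_n}_{n ≥ 0} satisfy a_n ≤ Σ_{l=0}^n a_{n-l} p_{n,l} + f for all n ≥ n₁, and τ := sup_{n ≥ n₁} Σ_{l=0}^n p_{n,l} satisfies τ ∈ (0,1). Then sup_{n ≥ 0} a_n < ∞. -/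
/-!
Take `M` at least the values `a 0, …, a n₁`, at least `0`, and with `f ≤ (1 - τ) M`. By strong
induction `a n ≤ M`: for `n ≥ n₁` the recursion bounds every term but the `l = 0` one by `M`, so
`a n (1 - p n 0) ≤ M (τ - p n 0) + f ≤ M (1 - p n 0)`, and `p n 0 ≤ τ < 1`.
-/

open Finset

theorem sum_range_succ_sub_mul_le (a q : ℕ → ℝ) (n : ℕ) {M : ℝ} (hq : ∀ l, 0 ≤ q l)
    (ha : ∀ m < n, a m ≤ M) :
    ∑ l ∈ range (n + 1), a (n - l) * q l ≤ a n * q 0 + M * ∑ l ∈ range n, q (l + 1) := by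
  rw [sum_range_succ', mul_sum, add_comm, Nat.sub_zero]
  gcongr with l hl
  · exact hq _
  · exact ha _ (by have := mem_range.mp hl; omega)

theorem le_of_le_mul_add_mul_add {x q r M f τ : ℝ} (hx : x ≤ x * q + M * r + f)
    (hqr : q + r ≤ τ) (hr : 0 ≤ r) (hτ : τ < 1) (hM : 0 ≤ M) (hf : f ≤ M * (1 - τ)) :
    x ≤ M := by
  have hq : 0 < 1 - q := by linarith
  have hMr : M * r ≤ M * (τ - q) := mul_le_mul_of_nonneg_left (by linarith) hM
  refine le_of_mul_le_mul_right ?_ hq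
  linarith

theorem le_of_recursive_inequality {n₁ : ℕ} {f τ M : ℝ} {p : ℕ → ℕ → ℝ} {a : ℕ → ℝ}
    (hp : ∀ n l, 0 ≤ p n l)
    (hrec : ∀ n, n₁ ≤ n → a n ≤ (∑ l ∈ range (n + 1), a (n - l) * p n l) + f)
    (hτsum : ∀ n, n₁ ≤ n → (∑ l ∈ range (n + 1), p n l) ≤ τ) (hτ : τ < 1)
    (hM : 0 ≤ M) (hf : f ≤ M * (1 - τ)) (hinit : ∀ n < n₁, a n ≤ M) (n : ℕ) :
    a n ≤ M := by
  induction n using Nat.strong_induction_on with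
  | _ n ih =>
    rcases lt_or_ge n n₁ with hn | hn
    · exact hinit n hn
    have hsum := sum_range_succ_sub_mul_le a (p n) n (hp n) ih
    have hmass : p n 0 + ∑ l ∈ range n, p n (l + 1) ≤ τ := by
      simpa [sum_range_succ' (p n) n, add_comm] using hτsum n hn
    exact le_of_le_mul_add_mul_add (by linarith [hrec n hn]) hmass
      (sum_nonneg fun l _ => hp n (l + 1)) hτ hM hf

theorem bounded_of_recursive_inequality_general
    (n₁ : ℕ) (f τ : ℝ) (p : ℕ → ℕ → ℝ) (a : ℕ → ℝ)
    (hp : ∀ n l, 0 ≤ p n l)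
    (hrec : ∀ n, n₁ ≤ n →
      a n ≤ (∑ l ∈ Finset.range (n + 1), a (n - l) * p n l) + f)
    (hτsum : ∀ n, n₁ ≤ n → (∑ l ∈ Finset.range (n + 1), p n l) ≤ τ)
    (hτ1 : τ < 1) :
    BddAbove (Set.range a) := by
  obtain ⟨A, hA⟩ := ((Set.finite_Iio n₁).image a).bddAbove
  set M := max (max A 0) (f / (1 - τ))
  have hf : f ≤ M * (1 - τ) := (div_le_iff₀ (by linarith)).mp (le_max_right _ _)
  refine ⟨M, Set.forall_mem_range.mpr fun n => ?_⟩
  refine le_of_recursive_inequality hp hrec hτsum hτ1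
    ((le_max_right A 0).trans (le_max_left _ _)) hf (fun m hm => ?_) n
  exact (hA ⟨m, hm, rfl⟩).trans ((le_max_left A 0).trans (le_max_left _ _))

/-- Lemma 3.1: a recursive inequality with total mass of the weights bounded by
`τ < 1` implies the sequence is bounded. -/
theorem bounded_of_recursive_inequality
    (n₁ : ℕ) (f τ : ℝ) (p : ℕ → ℕ → ℝ) (a : ℕ → ℝ)
    (hf : 0 ≤ f) (hp : ∀ n l, 0 ≤ p n l) (ha : ∀ n, 0 ≤ a n)
    (hrec : ∀ n, n₁ ≤ n →
      a n ≤ (∑ l ∈ Finset.range (n + 1), a (n - l) * p n l) + f)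
    (hτsum : ∀ n, n₁ ≤ n → (∑ l ∈ Finset.range (n + 1), p n l) ≤ τ)
    (hτ0 : 0 < τ) (hτ1 : τ < 1) :
    BddAbove (Set.range a) :=
  bounded_of_recursive_inequality_general n₁ f τ p a hp hrec hτsum hτ1
end

section
/- Let G_n be an Erdős–Rényi graph on vertex set {1,...,n} with independent edge indicators of common success probability p, let I be a uniformly chosen vertex independent of the graph, and let H_n be the graph obtained by removing I and all its incident edges (relabeling remaining vertices preserving order). Then conditionally on (I, deg(I)), H_n is distributed as an Erdős–Rényi graph on n-1 vertices with edge probability p; in particular H_n is independent of (I, deg(I)). -/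
open MeasureTheory

/-- Index set for potential edges of a graph on `Fin n`: ordered pairs `u < v`. -/
abbrev EdgeIdx (n : ℕ) := {e : Fin n × Fin n // e.1 < e.2}

/-- Adjacency relation determined by edge indicators `ω`. -/
def adjOf {n : ℕ} (ω : EdgeIdx n → Bool) (u v : Fin n) : Bool :=
  if h : u < v then ω ⟨(u, v), h⟩ else if h : v < u then ω ⟨(v, u), h⟩ else false

/-- Degree of vertex `v` in the graph with edge indicators `ω`. -/
def degOf {n : ℕ} (ω : EdgeIdx n → Bool) (v : Fin n) : ℕ :=
  (Finset.univ.filter fun w => adjOf ω v w = true).card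

/-- Number of vertices of degree `d` in the graph with edge indicators `ω`. -/
def degCount {n : ℕ} (d : ℕ) (ω : EdgeIdx n → Bool) : ℕ :=
  (Finset.univ.filter fun v => degOf ω v = d).card

/-- The Erdős–Rényi measure: independent `Bernoulli(p)` edge indicators. -/
noncomputable def gnp (n : ℕ) (p : ENNReal) (hp : p ≤ 1) :
    Measure (EdgeIdx n → Bool) :=
  Measure.pi fun _ => (PMF.bernoulli p.toNNReal (by simpa using ENNReal.toNNReal_mono ENNReal.one_ne_top hp)).toMeasure

/-- The graph on `n` vertices obtained by removing vertex `i` (and its incident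
edges) from a graph on `n+1` vertices, relabeling the remaining vertices so as
to preserve their relative order. -/
def removeVertex {n : ℕ} (i : Fin (n + 1)) (ω : EdgeIdx (n + 1) → Bool) :
    EdgeIdx n → Bool :=
  fun e => adjOf ω (i.succAbove e.1.1) (i.succAbove e.1.2)

/-! Fix the removed vertex `j`. Splitting the potential edges of `Fin (n + 1)` into those avoiding
`j` (relabelled through `j.succAbove`) and the `n` edges at `j` identifies `G(n + 1, p)` with the
product of `G(n, p)` and `n` further independent `Bernoulli(p)` indicators. Under this
identification, deleting `j` is the first projection and `deg j` is a function of the second, so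
for fixed `j` the remaining graph has law `G(n, p)` and is independent of `deg j`. Since that law
does not depend on `j`, both properties survive when `j` is drawn independently of the graph. -/

open ProbabilityTheory

lemma indepFun_of_measurePreserving {Ω' Ω γ δ : Type*} [MeasurableSpace Ω'] [MeasurableSpace Ω]
    [MeasurableSpace γ] [MeasurableSpace δ] {μ' : Measure Ω'} {μ : Measure Ω} {T : Ω' → Ω}
    {f : Ω → γ} {g : Ω → δ} (hT : MeasurePreserving T μ' μ) (hf : Measurable f)
    (hg : Measurable g) (h : (f ∘ T) ⟂ᵢ[μ'] (g ∘ T)) : f ⟂ᵢ[μ] g := by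
  rw [indepFun_iff_measure_inter_preimage_eq_mul] at h ⊢
  intro s t hs ht
  rw [← hT.measure_preimage ((hf hs).inter (hg ht)).nullMeasurableSet,
    ← hT.measure_preimage (hf hs).nullMeasurableSet,
    ← hT.measure_preimage (hg ht).nullMeasurableSet]
  exact h s t hs ht

section Mixture

variable {ι Ω α β : Type*} [MeasurableSpace ι] [Countable ι] [MeasurableSingletonClass ι]
  [MeasurableSpace Ω] [MeasurableSpace α] [MeasurableSpace β]
  {u : Measure ι} [IsProbabilityMeasure u] {ν : Measure Ω} [SFinite ν] {ρ : Measure α}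
  {F : ι → Ω → α} {D : ι → Ω → β}

lemma map_uncurry_prod_eq (hF : ∀ i, Measurable (F i)) (hlaw : ∀ i, ν.map (F i) = ρ) :
    (u.prod ν).map (fun x => F x.1 x.2) = ρ := by
  have hFm : Measurable fun x : ι × Ω => F x.1 x.2 := measurable_from_prod_countable_right hF
  ext A hA
  have hfiber : ∀ i, ν (F i ⁻¹' A) = ρ A := fun i => by
    rw [← hlaw i, Measure.map_apply (hF i) hA]
  rw [Measure.map_apply hFm hA, Measure.prod_apply (hFm hA)]
  simp_rw [Set.preimage_preimage, hfiber, lintegral_const, measure_univ, mul_one]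

lemma indepFun_uncurry_prod (hF : ∀ i, Measurable (F i)) (hD : ∀ i, Measurable (D i))
    (hindep : ∀ i, F i ⟂ᵢ[ν] D i) (hlaw : ∀ i, ν.map (F i) = ρ) :
    (fun x : ι × Ω => F x.1 x.2) ⟂ᵢ[u.prod ν] (fun x => (x.1, D x.1 x.2)) := by
  have hFm : Measurable fun x : ι × Ω => F x.1 x.2 := measurable_from_prod_countable_right hF
  have hGm : Measurable fun x : ι × Ω => (x.1, D x.1 x.2) :=
    measurable_from_prod_countable_right fun i => measurable_const.prodMk (hD i)
  rw [indepFun_iff_measure_inter_preimage_eq_mul]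
  intro A C hA hC
  have hmarg : (u.prod ν) ((fun x => F x.1 x.2) ⁻¹' A) = ρ A := by
    rw [← Measure.map_apply hFm hA, map_uncurry_prod_eq hF hlaw]
  have hfiber : ∀ i,
      ν (Prod.mk i ⁻¹' ((fun x => F x.1 x.2) ⁻¹' A ∩ (fun x => (x.1, D x.1 x.2)) ⁻¹' C)) =
        ρ A * ν (Prod.mk i ⁻¹' ((fun x => (x.1, D x.1 x.2)) ⁻¹' C)) := fun i => by
    rw [← hlaw i, Measure.map_apply (hF i) hA]
    exact (hindep i).measure_inter_preimage_eq_mul _ _ hA (measurable_prodMk_left hC)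
  rw [hmarg, Measure.prod_apply ((hFm hA).inter (hGm hC)), Measure.prod_apply (hGm hC)]
  simp_rw [hfiber]
  exact lintegral_const_mul _ (measurable_of_countable _)

end Mixture

section EdgeSplit

variable {m n : ℕ}

def edgeOf {u v : Fin m} (h : u ≠ v) : EdgeIdx m :=
  if huv : u < v then ⟨(u, v), huv⟩ else ⟨(v, u), lt_of_le_of_ne (not_lt.1 huv) h.symm⟩

lemma edgeOf_of_lt {u v : Fin m} (h : u < v) : edgeOf h.ne = ⟨(u, v), h⟩ := dif_pos h

lemma edgeOf_comm {u v : Fin m} (h : u ≠ v) : edgeOf h = edgeOf h.symm := by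
  rcases h.lt_or_gt with huv | hvu
  · simp [edgeOf, huv, huv.not_gt]
  · simp [edgeOf, hvu, hvu.not_gt]

lemma adjOf_of_ne (ω : EdgeIdx m → Bool) {u v : Fin m} (h : u ≠ v) :
    adjOf ω u v = ω (edgeOf h) := by
  unfold adjOf edgeOf
  split_ifs with huv hvu
  · rfl
  · rfl
  · exact absurd (le_antisymm (not_lt.1 hvu) (not_lt.1 huv)) h

lemma adjOf_self (ω : EdgeIdx m → Bool) (v : Fin m) : adjOf ω v v = false := by
  simp [adjOf]

def edgeEnds (e : EdgeIdx m) : Sym2 (Fin m) := s(e.1.1, e.1.2)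

lemma edgeEnds_injective : Function.Injective (edgeEnds (m := m)) := by
  rintro ⟨⟨a, b⟩, hab⟩ ⟨⟨c, d⟩, hcd⟩ h
  rcases Sym2.eq_iff.1 h with ⟨rfl, rfl⟩ | ⟨rfl, rfl⟩
  · rfl
  · exact absurd hab hcd.not_gt

lemma edgeEnds_edgeOf {u v : Fin m} (h : u ≠ v) : edgeEnds (edgeOf h) = s(u, v) := by
  unfold edgeOf
  split_ifs
  · rfl
  · exact Sym2.eq_swap

def splitEdge (j : Fin (n + 1)) : EdgeIdx n ⊕ Fin n → EdgeIdx (n + 1)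
  | .inl e => ⟨(j.succAbove e.1.1, j.succAbove e.1.2), Fin.succAbove_lt_succAbove_iff.2 e.2⟩
  | .inr k => edgeOf (j.succAbove_ne k).symm

lemma splitEdge_injective (j : Fin (n + 1)) : Function.Injective (splitEdge j) := by
  have ends_inl (e : EdgeIdx n) : edgeEnds (splitEdge j (.inl e)) = (edgeEnds e).map j.succAbove :=
    rfl
  have ends_inr (k : Fin n) : edgeEnds (splitEdge j (.inr k)) = s(j, j.succAbove k) :=
    edgeEnds_edgeOf (j.succAbove_ne k).symm
  have not_inl_eq_inr (e : EdgeIdx n) (k : Fin n) :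
      splitEdge j (.inl e) ≠ splitEdge j (.inr k) := by
    intro h
    have hj : j ∈ edgeEnds (splitEdge j (.inl e)) := by
      rw [h, ends_inr]
      exact Sym2.mem_mk_left _ _
    obtain ⟨w, -, hw⟩ := Sym2.mem_map.1 (ends_inl e ▸ hj)
    exact j.succAbove_ne w hw
  rintro (a | a) (b | b) h
  · have := congrArg edgeEnds h
    rw [ends_inl, ends_inl] at this
    exact congrArg _ (edgeEnds_injective (Sym2.map.injective Fin.succAbove_right_injective this))
  · exact absurd h (not_inl_eq_inr a b)
  · exact absurd h.symm (not_inl_eq_inr b a)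
  · have := congrArg edgeEnds h
    rw [ends_inr, ends_inr] at this
    exact congrArg _ (Fin.succAbove_right_injective (Sym2.congr_right.1 this))

lemma splitEdge_surjective (j : Fin (n + 1)) : Function.Surjective (splitEdge j) := by
  rintro ⟨⟨u, v⟩, huv⟩
  dsimp only at huv
  by_cases hu : u = j
  · subst hu
    obtain ⟨k, rfl⟩ := Fin.exists_succAbove_eq huv.ne'
    exact ⟨.inr k, edgeOf_of_lt huv⟩
  by_cases hv : v = j
  · subst hv
    obtain ⟨k, rfl⟩ := Fin.exists_succAbove_eq hu
    exact ⟨.inr k, (edgeOf_comm huv.ne').trans (edgeOf_of_lt huv)⟩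
  obtain ⟨a, rfl⟩ := Fin.exists_succAbove_eq hu
  obtain ⟨b, rfl⟩ := Fin.exists_succAbove_eq hv
  exact ⟨.inl ⟨(a, b), Fin.succAbove_lt_succAbove_iff.1 huv⟩, rfl⟩

noncomputable def splitEdgeEquiv (j : Fin (n + 1)) : EdgeIdx n ⊕ Fin n ≃ EdgeIdx (n + 1) :=
  .ofBijective (splitEdge j) ⟨splitEdge_injective j, splitEdge_surjective j⟩

noncomputable def splitGraph (j : Fin (n + 1)) :
    ((EdgeIdx n → Bool) × (Fin n → Bool)) ≃ᵐ (EdgeIdx (n + 1) → Bool) :=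
  (MeasurableEquiv.sumPiEquivProdPi fun _ => Bool).symm.trans
    (MeasurableEquiv.piCongrLeft (fun _ => Bool) (splitEdgeEquiv j))

lemma splitGraph_apply_splitEdge (j : Fin (n + 1)) (x : (EdgeIdx n → Bool) × (Fin n → Bool))
    (e : EdgeIdx n ⊕ Fin n) : splitGraph j x (splitEdge j e) = Sum.elim x.1 x.2 e := by
  rw [splitGraph, MeasurableEquiv.trans_apply, MeasurableEquiv.coe_piCongrLeft]
  refine (Equiv.piCongrLeft_apply_apply (fun _ => Bool) (splitEdgeEquiv j) _ e).trans ?_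
  rcases e <;> rfl

lemma removeVertex_comp_splitGraph (j : Fin (n + 1)) :
    removeVertex j ∘ splitGraph j = Prod.fst :=
  funext fun x => funext fun e => (dif_pos _).trans (splitGraph_apply_splitEdge j x (.inl e))

lemma adjOf_splitGraph_succAbove (j : Fin (n + 1)) (x : (EdgeIdx n → Bool) × (Fin n → Bool))
    (k : Fin n) : adjOf (splitGraph j x) j (j.succAbove k) = x.2 k :=
  (adjOf_of_ne _ (j.succAbove_ne k).symm).trans (splitGraph_apply_splitEdge j x (.inr k))

lemma degOf_splitGraph (j : Fin (n + 1)) (x : (EdgeIdx n → Bool) × (Fin n → Bool)) :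
    degOf (splitGraph j x) j = (Finset.univ.filter fun k => x.2 k = true).card := by
  rw [degOf, Fin.univ_succAbove _ j,
    Finset.filter_cons_of_neg (hp := by rw [adjOf_self]; decide), Finset.filter_map,
    Finset.card_map]
  congr 2
  ext k
  simp only [Function.comp_apply, Fin.succAboveEmb_apply, adjOf_splitGraph_succAbove]

lemma measurePreserving_splitGraph (μ : Measure Bool) [SigmaFinite μ] (j : Fin (n + 1)) :
    MeasurePreserving (splitGraph j) ((Measure.pi fun _ => μ).prod (Measure.pi fun _ => μ))
      (Measure.pi fun _ => μ) :=
  (measurePreserving_piCongrLeft (fun _ => μ) (splitEdgeEquiv j)).comp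
    (measurePreserving_sumPiEquivProdPi_symm fun _ => μ)

end EdgeSplit

section ErdosRenyi

variable {n : ℕ} {p : ENNReal} {hp : p ≤ 1}

instance (n : ℕ) (p : ENNReal) (hp : p ≤ 1) : IsProbabilityMeasure (gnp n p hp) := by
  unfold gnp
  infer_instance

lemma map_removeVertex_gnp (j : Fin (n + 1)) :
    (gnp (n + 1) p hp).map (removeVertex j) = gnp n p hp := by
  unfold gnp
  rw [← (measurePreserving_splitGraph _ j).map_eq,
    Measure.map_map (measurable_of_countable _) (MeasurableEquiv.measurable _),
    removeVertex_comp_splitGraph, Measure.map_fst_prod, measure_univ, one_smul]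

lemma indepFun_removeVertex_degOf (j : Fin (n + 1)) :
    removeVertex j ⟂ᵢ[gnp (n + 1) p hp] fun ω => degOf ω j := by
  have hdeg : (fun ω => degOf ω j) ∘ splitGraph j =
      fun x => (Finset.univ.filter fun k => x.2 k = true).card :=
    funext (degOf_splitGraph j)
  unfold gnp
  refine indepFun_of_measurePreserving (measurePreserving_splitGraph _ j)
    (measurable_of_countable (removeVertex j)) (measurable_of_countable fun ω => degOf ω j) ?_
  rw [removeVertex_comp_splitGraph, hdeg]
  exact indepFun_prod (X := id)
    (Y := fun χ : Fin n → Bool => (Finset.univ.filter fun k => χ k = true).card)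
    measurable_id (measurable_of_countable _)

end ErdosRenyi

/-- Removing a uniformly chosen vertex `I` from `G_{n+1}`: conditionally on
`(I, deg I)` the remaining graph is an Erdős–Rényi graph on `n` vertices with
the same edge probability; equivalently, the remaining graph is independent of
`(I, deg I)` and has the `G(n, p)` law. -/
theorem remove_uniform_vertex_law
    (n : ℕ) (p : ENNReal) (hp : p ≤ 1) :
    (ProbabilityTheory.IndepFun
        (fun ω : Fin (n + 1) × (EdgeIdx (n + 1) → Bool) => removeVertex ω.1 ω.2)
        (fun ω : Fin (n + 1) × (EdgeIdx (n + 1) → Bool) => (ω.1, degOf ω.2 ω.1))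
        (((PMF.uniformOfFintype (Fin (n + 1))).toMeasure).prod (gnp (n + 1) p hp)))
      ∧ Measure.map
          (fun ω : Fin (n + 1) × (EdgeIdx (n + 1) → Bool) => removeVertex ω.1 ω.2)
          (((PMF.uniformOfFintype (Fin (n + 1))).toMeasure).prod (gnp (n + 1) p hp))
        = gnp n p hp :=
  ⟨indepFun_uncurry_prod (fun _ => measurable_of_countable _) (fun _ => measurable_of_countable _)
      indepFun_removeVertex_degOf map_removeVertex_gnp,
    map_uncurry_prod_eq (fun _ => measurable_of_countable _) map_removeVertex_gnp⟩
end
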